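/- Let M be the n-dimensional Riemannian product of m round unit spheres, each of dimension at least 1, so that the dimensions sum to n. Then M has positive (p,n)-intermediate scalar curvature if and only if p < n - m. -/

import Mathlib

/-!
Split every tangent vector into its components along the sphere factors. Then `K(v, w)` is a sum
of Gram determinants `|v_a|² |w_a|² - ⟪v_a, w_a⟫²`, which are nonnegative by Cauchy–Schwarz, so
the intermediate scalar curvature vanishes only if the components of all `e i` along each factor
are collinear. That forces the `n - p` vectors `e i` into a span of at most `m` vectors, which is
impossible once `m < n - p`. Conversely, if `n - p ≤ m`, unit vectors tangent to `n - p` distinct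
factors span mutually flat planes, so the intermediate scalar curvature vanishes at their
orthogonal complement, a `p`-plane.
-/

open Module Finset

/-- The curvature form `R(v,w,w,v)` of the Riemannian product of `m` round unit spheres,
whose tangent coordinates `Fin n` are partitioned into blocks by `c : Fin n → Fin m`
(block `a` being the tangent space of the `a`-th sphere factor): the sum over the factors
of the squared wedge of the projections of `v` and `w` to that factor.  For orthonormal
`v, w` this is the sectional curvature of their span. -/
noncomputable def sphereProdK {n m : ℕ} (c : Fin n → Fin m)
    (v w : EuclideanSpace ℝ (Fin n)) : ℝ :=
  ∑ a : Fin m,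
    ((∑ i ∈ univ.filter (fun i => c i = a), (v i) ^ 2) *
        (∑ i ∈ univ.filter (fun i => c i = a), (w i) ^ 2) -
      (∑ i ∈ univ.filter (fun i => c i = a), v i * w i) ^ 2)

/-- `∑_{i ≠ j} K (e i) (e j)`: the `(p,n)`-intermediate scalar curvature when `e`
is an orthonormal basis of the orthogonal complement of a `p`-plane. -/
noncomputable def sSum {n k : ℕ}
    (K : EuclideanSpace ℝ (Fin n) → EuclideanSpace ℝ (Fin n) → ℝ)
    (e : Fin k → EuclideanSpace ℝ (Fin n)) : ℝ :=
  ∑ i : Fin k, ∑ j : Fin k, if i ≠ j then K (e i) (e j) else 0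

open RealInnerProductSpace

section InnerProductSpace

variable {F : Type*} [NormedAddCommGroup F] [InnerProductSpace ℝ F]

lemma real_inner_sq_le_inner_self_mul_inner_self (x y : F) : ⟪x, y⟫ ^ 2 ≤ ⟪x, x⟫ * ⟪y, y⟫ := by
  simpa only [sq] using real_inner_mul_inner_self_le x y

lemma mem_span_singleton_of_inner_sq_eq {x y : F} (hx : x ≠ 0)
    (h : ⟪x, y⟫ ^ 2 = ⟪x, x⟫ * ⟪y, y⟫) : y ∈ ℝ ∙ x := by
  have hnorm : ‖⟪x, y⟫‖ = ‖x‖ * ‖y‖ := by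
    rw [Real.norm_eq_abs, ← sq_eq_sq₀ (abs_nonneg _) (by positivity), sq_abs, h,
      real_inner_self_eq_norm_sq, real_inner_self_eq_norm_sq, mul_pow]
  exact (((norm_inner_eq_norm_tfae ℝ x y).out 0 3).1 hnorm : x = 0 ∨ y ∈ ℝ ∙ x).resolve_left hx

lemma exists_forall_mem_span_singleton_of_inner_sq_eq {ι : Type*} {v : ι → F}
    (h : ∀ i j, ⟪v i, v j⟫ ^ 2 = ⟪v i, v i⟫ * ⟪v j, v j⟫) : ∃ g : F, ∀ i, v i ∈ ℝ ∙ g := by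
  by_cases hzero : ∀ i, v i = 0
  · exact ⟨0, fun i => by simp [hzero i]⟩
  · push Not at hzero
    obtain ⟨i₀, hi₀⟩ := hzero
    exact ⟨v i₀, fun i => mem_span_singleton_of_inner_sq_eq hi₀ (h i₀ i)⟩

lemma finrank_orthogonal_span_range [FiniteDimensional ℝ F] {k : ℕ} {e : Fin k → F}
    (he : LinearIndependent ℝ e) :
    finrank ℝ (Submodule.span ℝ (Set.range e))ᗮ = finrank ℝ F - k := by
  rw [← Submodule.finrank_add_finrank_orthogonal (Submodule.span ℝ (Set.range e)),
    finrank_span_eq_card he, Fintype.card_fin, Nat.add_sub_cancel_left]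

end InnerProductSpace

lemma exists_injective_comp_of_surjective {α : Type*} {m k : ℕ} {c : α → Fin m}
    (hc : Function.Surjective c) (hk : k ≤ m) : ∃ f : Fin k → α, Function.Injective (c ∘ f) :=
  ⟨Function.surjInv hc ∘ Fin.castLE hk, by
    simpa [Function.comp_def, Function.surjInv_eq hc] using Fin.castLE_injective hk⟩

lemma sSum_eq_sum_sum_of_forall_self_eq_zero {n k : ℕ}
    {K : EuclideanSpace ℝ (Fin n) → EuclideanSpace ℝ (Fin n) → ℝ} (hK : ∀ v, K v v = 0)
    (e : Fin k → EuclideanSpace ℝ (Fin n)) : sSum K e = ∑ i, ∑ j, K (e i) (e j) := by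
  refine sum_congr rfl fun i _ => sum_congr rfl fun j _ => ?_
  split_ifs with hij
  · rfl
  · rw [not_not.1 hij, hK]

section SphereProduct

variable {n m : ℕ} (c : Fin n → Fin m)

noncomputable def blockProj (a : Fin m) (v : EuclideanSpace ℝ (Fin n)) :
    EuclideanSpace ℝ (Fin n) :=
  WithLp.toLp 2 fun x => if c x = a then v x else 0

lemma inner_blockProj (a : Fin m) (v w : EuclideanSpace ℝ (Fin n)) :
    ⟪blockProj c a v, blockProj c a w⟫ = ∑ x ∈ univ.filter (fun x => c x = a), v x * w x := by
  simp only [PiLp.inner_apply, RCLike.inner_apply, conj_trivial, sum_filter]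
  refine sum_congr rfl fun x _ => ?_
  by_cases hx : c x = a <;> simp [blockProj, hx, mul_comm]

lemma sum_blockProj (v : EuclideanSpace ℝ (Fin n)) : ∑ a, blockProj c a v = v := by
  ext x
  simp [blockProj, WithLp.ofLp_sum, Finset.sum_apply]

lemma blockProj_single (a : Fin m) (x : Fin n) (r : ℝ) :
    blockProj c a (EuclideanSpace.single x r) =
      if c x = a then EuclideanSpace.single x r else 0 := by
  ext y
  by_cases hy : y = x
  · subst hy; split_ifs <;> simp [blockProj, *]
  · split_ifs <;> simp [blockProj, hy]

lemma sphereProdK_eq_sum_blockProj (v w : EuclideanSpace ℝ (Fin n)) :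
    sphereProdK c v w = ∑ a, (⟪blockProj c a v, blockProj c a v⟫ *
      ⟪blockProj c a w, blockProj c a w⟫ - ⟪blockProj c a v, blockProj c a w⟫ ^ 2) := by
  simp only [sphereProdK, inner_blockProj, sq]

lemma sphereProdK_nonneg (v w : EuclideanSpace ℝ (Fin n)) : 0 ≤ sphereProdK c v w := by
  rw [sphereProdK_eq_sum_blockProj]
  exact sum_nonneg fun a _ => sub_nonneg.2 (real_inner_sq_le_inner_self_mul_inner_self _ _)

lemma sphereProdK_self (v : EuclideanSpace ℝ (Fin n)) : sphereProdK c v v = 0 := by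
  simp only [sphereProdK, sq, sub_self, sum_const_zero]

lemma sphereProdK_single_single {x y : Fin n} (hxy : c x ≠ c y) (r s : ℝ) :
    sphereProdK c (EuclideanSpace.single x r) (EuclideanSpace.single y s) = 0 := by
  rw [sphereProdK_eq_sum_blockProj]
  refine sum_eq_zero fun a _ => ?_
  simp only [blockProj_single]
  split_ifs with hx hy <;> simp_all

lemma sSum_sphereProdK_single_eq_zero {k : ℕ} {f : Fin k → Fin n}
    (hf : Function.Injective (c ∘ f)) :
    sSum (sphereProdK c) (fun i => EuclideanSpace.single (f i) 1) = 0 := by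
  rw [sSum_eq_sum_sum_of_forall_self_eq_zero (sphereProdK_self c)]
  refine sum_eq_zero fun i _ => sum_eq_zero fun j _ => ?_
  by_cases hij : i = j
  · rw [hij, sphereProdK_self]
  · exact sphereProdK_single_single c (hf.ne hij) 1 1

lemma finrank_span_range_le_of_sphereProdK_eq_zero {ι : Type*} {e : ι → EuclideanSpace ℝ (Fin n)}
    (h : ∀ i j, sphereProdK c (e i) (e j) = 0) :
    finrank ℝ (Submodule.span ℝ (Set.range e)) ≤ m := by
  have hcollinear : ∀ a i j, ⟪blockProj c a (e i), blockProj c a (e j)⟫ ^ 2 =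
      ⟪blockProj c a (e i), blockProj c a (e i)⟫ * ⟪blockProj c a (e j), blockProj c a (e j)⟫ := by
    intro a i j
    have hterms := h i j
    rw [sphereProdK_eq_sum_blockProj, Fintype.sum_eq_zero_iff_of_nonneg fun a =>
      sub_nonneg.2 (real_inner_sq_le_inner_self_mul_inner_self _ _)] at hterms
    exact (sub_eq_zero.1 (by simpa using congrFun hterms a)).symm
  choose g hg using fun a => exists_forall_mem_span_singleton_of_inner_sq_eq (hcollinear a)
  have hle : Submodule.span ℝ (Set.range e) ≤ Submodule.span ℝ (Set.range g) := by
    rw [Submodule.span_le]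
    rintro _ ⟨i, rfl⟩
    rw [← sum_blockProj c (e i)]
    exact Submodule.sum_mem _ fun a _ =>
      Submodule.span_mono (Set.singleton_subset_iff.2 (Set.mem_range_self a)) (hg a i)
  calc finrank ℝ (Submodule.span ℝ (Set.range e))
      ≤ finrank ℝ (Submodule.span ℝ (Set.range g)) := Submodule.finrank_mono hle
    _ ≤ m := (finrank_range_le_card g).trans_eq (Fintype.card_fin m)

lemma sSum_sphereProdK_pos {k : ℕ} {e : Fin k → EuclideanSpace ℝ (Fin n)}
    (he : LinearIndependent ℝ e) (hmk : m < k) : 0 < sSum (sphereProdK c) e := by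
  rw [sSum_eq_sum_sum_of_forall_self_eq_zero (sphereProdK_self c), ← Fintype.sum_prod_type']
  by_contra! hle
  have hzero := (Fintype.sum_eq_zero_iff_of_nonneg fun ij => sphereProdK_nonneg c _ _).1
    (le_antisymm hle (sum_nonneg fun ij _ => sphereProdK_nonneg c _ _))
  have hrank := finrank_span_range_le_of_sphereProdK_eq_zero c fun i j => congrFun hzero (i, j)
  rw [finrank_span_eq_card he, Fintype.card_fin] at hrank
  omega

end SphereProduct

/-- The `n`-dimensional Riemannian product of `m` round unit spheres (each of dimension
at least one, encoded by the surjective block assignment `c : Fin n → Fin m`) has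
positive `(p,n)`-intermediate scalar curvature if and only if `p < n - m`. -/
theorem product_of_spheres_intermediate_curvature (n m p : ℕ) (hp : p ≤ n - 2)
    (c : Fin n → Fin m) (hc : Function.Surjective c) :
    (∀ P : Submodule ℝ (EuclideanSpace ℝ (Fin n)), finrank ℝ P = p →
        ∀ e : Fin (n - p) → EuclideanSpace ℝ (Fin n),
          Orthonormal ℝ e → (∀ i, e i ∈ Pᗮ) → 0 < sSum (sphereProdK c) e) ↔
      p < n - m := by
  constructor
  · intro hpos
    by_contra! hmp
    obtain ⟨f, hf⟩ := exists_injective_comp_of_surjective hc (k := n - p) (by omega)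
    set e : Fin (n - p) → EuclideanSpace ℝ (Fin n) := fun i => EuclideanSpace.single (f i) 1
    have he : Orthonormal ℝ e := EuclideanSpace.orthonormal_single.comp f hf.of_comp
    have hrank : finrank ℝ (Submodule.span ℝ (Set.range e))ᗮ = p := by
      rw [finrank_orthogonal_span_range he.linearIndependent, finrank_euclideanSpace_fin]
      omega
    have hmem : ∀ i, e i ∈ (Submodule.span ℝ (Set.range e))ᗮᗮ := fun i =>
      Submodule.le_orthogonal_orthogonal _ (Submodule.subset_span (Set.mem_range_self i))
    have hzero := hpos _ hrank e he hmem
    rw [sSum_sphereProdK_single_eq_zero c hf] at hzero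
    exact hzero.false
  · intro hmp P _ e he _
    exact sSum_sphereProdK_pos c he.linearIndependent (by omega)
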